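/- arXiv:1604.05403 — 2 statements merged into one kernel-verified Lean document; each statement's English description precedes it below -/
import Mathlib

section
/- Let φ : U → U' be a homeomorphism between finite-dimensional real inner product spaces intertwining bilinear forms Φ, Φ', with left kernels L, L' and K = {x | Φ(x,L) = 0}, K' = {x' | Φ'(x',L') = 0}. Let L⊥_K be the orthogonal complement of L inside K, and L'⊥_{K'} the orthogonal complement of L' inside K'. Define ψ : L⊥_K → L'⊥_{K'} as the composition of the inclusion L⊥_K → K, the restriction of φ (which maps K onto K'), and the orthogonal projection K' → L'⊥_{K'} along L'. Define ψ' : L'⊥_{K'} → L⊥_K analogously using φ^{-1}. Then ψ' ∘ ψ = id and ψ ∘ ψ' = id, so ψ is a homeomorphism. -/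
open Submodule LinearMap

section Projection

variable {𝕜 E E' : Type*} [RCLike 𝕜]
  [NormedAddCommGroup E] [InnerProductSpace 𝕜 E] [NormedAddCommGroup E'] [InnerProductSpace 𝕜 E']

theorem Submodule.starProjection_inf_orthogonal_eq {L K : Submodule 𝕜 E}
    [(Lᗮ ⊓ K).HasOrthogonalProjection] {v a : E} (ha : a ∈ Lᗮ ⊓ K) (hva : v - a ∈ L) :
    (Lᗮ ⊓ K).starProjection v = a :=
  eq_starProjection_of_mem_orthogonal ha
    ((L.le_orthogonal_orthogonal.trans (orthogonal_le inf_le_left)) hva)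

theorem Submodule.sub_starProjection_inf_orthogonal_mem {L K : Submodule 𝕜 E}
    [L.HasOrthogonalProjection] [(Lᗮ ⊓ K).HasOrthogonalProjection] (hLK : L ≤ K) {v : E}
    (hv : v ∈ K) : v - (Lᗮ ⊓ K).starProjection v ∈ L := by
  have hdecomp : v - L.starProjection v ∈ Lᗮ ⊓ K :=
    ⟨sub_starProjection_mem_orthogonal v, K.sub_mem hv (hLK (L.starProjection_apply_mem v))⟩
  rw [starProjection_inf_orthogonal_eq hdecomp (by simp)]
  simp

/-- Projecting `f x` onto `L'ᗮ ⊓ K'` only moves it along `L'`; `g` turns that into a move along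
`L`, which the projection onto `Lᗮ ⊓ K` removes again. -/
theorem Submodule.orthogonalProjectionOnto_inf_orthogonal_round_trip
    {L K : Submodule 𝕜 E} {L' K' : Submodule 𝕜 E'}
    [(Lᗮ ⊓ K).HasOrthogonalProjection] [L'.HasOrthogonalProjection]
    [(L'ᗮ ⊓ K').HasOrthogonalProjection] (hLK' : L' ≤ K') {f : E → E'} {g : E' → E}
    (hfg : Function.RightInverse g f) (hf : Set.MapsTo f K K')
    (hfL : ∀ x w, f x - f w ∈ L' → x - w ∈ L) (x : ↥(Lᗮ ⊓ K)) :
    (Lᗮ ⊓ K).orthogonalProjectionOnto (g ((L'ᗮ ⊓ K').orthogonalProjectionOnto (f x))) = x := by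
  set a := (L'ᗮ ⊓ K').orthogonalProjectionOnto (f x)
  have hfa : f x - a ∈ L' :=
    sub_starProjection_inf_orthogonal_mem hLK' (hf (inf_le_right (a := Lᗮ) x.2))
  have hga : g a - x ∈ L := hfL _ _ (by simpa [hfg a] using L'.neg_mem hfa)
  exact Subtype.ext (starProjection_inf_orthogonal_eq x.2 hga)

end Projection

section BilinearForm

variable {R M M' N : Type*} [CommRing R] [AddCommGroup M] [Module R M]
  [AddCommGroup M'] [Module R M'] [AddCommGroup N] [Module R N]
  {B : M →ₗ[R] M →ₗ[R] N} {B' : M' →ₗ[R] M' →ₗ[R] N} {f : M → M'}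

theorem LinearMap.mem_ker_compl₂_subtype_iff {M₂ : Type*} [AddCommGroup M₂] [Module R M₂]
    {B : M →ₗ[R] M₂ →ₗ[R] N} {S : Submodule R M₂} {x : M} :
    x ∈ ker (B.compl₂ S.subtype) ↔ ∀ y ∈ S, B x y = 0 := by
  simp [LinearMap.ext_iff]

theorem LinearMap.ker_le_ker_compl₂_ker_subtype (B : M →ₗ[R] M →ₗ[R] N) :
    ker B ≤ ker (B.compl₂ (ker B).subtype) := fun x hx =>
  mem_ker_compl₂_subtype_iff.2 fun y _ => by rw [mem_ker.1 hx, zero_apply]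

theorem LinearMap.sub_mem_ker_of_map_sub_mem_ker (hf : ∀ x y, B x y = B' (f x) (f y))
    {x w : M} (h : f x - f w ∈ ker B') : x - w ∈ ker B := by
  simp only [mem_ker, LinearMap.ext_iff, map_sub, sub_apply, zero_apply] at h ⊢
  intro y
  simp [hf, h (f y)]

theorem LinearMap.mapsTo_ker_of_rightInverse (hf : ∀ x y, B x y = B' (f x) (f y)) {g : M' → M}
    (hfg : Function.RightInverse g f) : Set.MapsTo g (ker B') (ker B) := by
  intro l hl
  simp only [SetLike.mem_coe, mem_ker, LinearMap.ext_iff, zero_apply] at hl ⊢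
  intro y
  rw [hf, hfg l, hl]

theorem LinearMap.mapsTo_ker_compl₂_ker_subtype (hf : ∀ x y, B x y = B' (f x) (f y))
    {g : M' → M} (hfg : Function.RightInverse g f) :
    Set.MapsTo f (ker (B.compl₂ (ker B).subtype)) (ker (B'.compl₂ (ker B').subtype)) := by
  intro x hx
  rw [SetLike.mem_coe, mem_ker_compl₂_subtype_iff] at hx ⊢
  intro l hl
  rw [← hfg l, ← hf]
  exact hx _ (mapsTo_ker_of_rightInverse hf hfg hl)

end BilinearForm

/-- With `L, L'` the left kernels, `K = {x | Φ(x,L)=0}`,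
`K' = {x' | Φ'(x',L')=0}`, and `ψ : L⊥∩K → L'⊥∩K'` given by applying `φ` and
then orthogonally projecting (and `ψ'` analogously from `φ⁻¹`), one has
`ψ' ∘ ψ = id`, `ψ ∘ ψ' = id`, and `ψ`, `ψ'` are continuous, so `ψ` is a
homeomorphism. -/
theorem stmt_4 {U U' : Type*}
    [NormedAddCommGroup U] [InnerProductSpace ℝ U] [FiniteDimensional ℝ U]
    [NormedAddCommGroup U'] [InnerProductSpace ℝ U'] [FiniteDimensional ℝ U']
    (Φ : U →ₗ[ℝ] U →ₗ[ℝ] ℝ) (Φ' : U' →ₗ[ℝ] U' →ₗ[ℝ] ℝ)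
    (φ : U ≃ₜ U')
    (h : ∀ x y : U, Φ x y = Φ' (φ x) (φ y))
    (L : Submodule ℝ U) (hL : L = LinearMap.ker Φ)
    (K : Submodule ℝ U) (hK : K = LinearMap.ker (Φ.compl₂ L.subtype))
    (L' : Submodule ℝ U') (hL' : L' = LinearMap.ker Φ')
    (K' : Submodule ℝ U') (hK' : K' = LinearMap.ker (Φ'.compl₂ L'.subtype))
    (ψ : ↥(Lᗮ ⊓ K) → ↥(L'ᗮ ⊓ K'))
    (hψ : ∀ x : ↥(Lᗮ ⊓ K), ψ x = (L'ᗮ ⊓ K').orthogonalProjectionOnto (φ (x : U)))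
    (ψ' : ↥(L'ᗮ ⊓ K') → ↥(Lᗮ ⊓ K))
    (hψ' : ∀ x' : ↥(L'ᗮ ⊓ K'), ψ' x' = (Lᗮ ⊓ K).orthogonalProjectionOnto (φ.symm (x' : U'))) :
    (∀ x, ψ' (ψ x) = x) ∧ (∀ x', ψ (ψ' x') = x') ∧ Continuous ψ ∧ Continuous ψ' := by
  subst hL hK hL' hK'
  have h' : ∀ x y, Φ' x y = Φ (φ.symm x) (φ.symm y) := fun x y => by
    simpa using (h (φ.symm x) (φ.symm y)).symm
  rw [funext hψ, funext hψ']
  refine ⟨fun x => ?_, fun x' => ?_, by fun_prop, by fun_prop⟩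
  · exact orthogonalProjectionOnto_inf_orthogonal_round_trip (ker_le_ker_compl₂_ker_subtype Φ')
      φ.apply_symm_apply (mapsTo_ker_compl₂_ker_subtype h φ.apply_symm_apply)
      (fun _ _ => sub_mem_ker_of_map_sub_mem_ker h) x
  · exact orthogonalProjectionOnto_inf_orthogonal_round_trip (ker_le_ker_compl₂_ker_subtype Φ)
      φ.symm_apply_apply (mapsTo_ker_compl₂_ker_subtype h' φ.symm_apply_apply)
      (fun _ _ => sub_mem_ker_of_map_sub_mem_ker h') x'
end

section
/- In the setting of the previous construction, for all x, y ∈ L⊥_K one has Φ(x,y) = Φ'(ψ(x), ψ(y)); that is, the restrictions of Φ to L⊥_K and of Φ' to L'⊥_{K'} are topologically equivalent via ψ. -/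
/-!
Since `φ` intertwines `Φ` and `Φ'`, it pulls `L'` back into `L`, hence maps `K` into `K'`.
For `x ∈ L⊥_K`, the point `φ x ∈ K'` splits orthogonally as its projection onto `L'` plus a
remainder in `L'⊥_{K'}`, and that remainder is `ψ x`; so `φ x = ψ x + l` with `l ∈ L'`.
Expanding `Φ'(ψ x + l, ψ y + m)`, the terms with `l` vanish because `l` lies in the left
kernel, and the term `Φ'(ψ x, m)` vanishes because `ψ x ∈ K'` and `m ∈ L'`.
-/

namespace LinearMap

variable {R M M' : Type*} [CommRing R] [AddCommGroup M] [Module R M]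
  [AddCommGroup M'] [Module R M']

theorem mem_ker_iff_forall_apply_eq_zero {B : M →ₗ[R] M →ₗ[R] R} {z : M} :
    z ∈ ker B ↔ ∀ w, B z w = 0 := by
  simp only [mem_ker, LinearMap.ext_iff, LinearMap.zero_apply]

theorem mem_ker_compl₂_subtype_iff_s5 {B : M →ₗ[R] M →ₗ[R] R} {N : Submodule R M} {z : M} :
    z ∈ ker (B.compl₂ N.subtype) ↔ ∀ l ∈ N, B z l = 0 := by
  simp only [mem_ker, LinearMap.ext_iff, LinearMap.zero_apply, Subtype.forall, compl₂_apply,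
    Submodule.subtype_apply]

theorem ker_le_ker_compl₂_subtype_ker (B : M →ₗ[R] M →ₗ[R] R) :
    ker B ≤ ker (B.compl₂ (ker B).subtype) := fun _ hz =>
  mem_ker_compl₂_subtype_iff_s5.2 fun l _ => mem_ker_iff_forall_apply_eq_zero.1 hz l

theorem apply_add_add_of_mem_ker {B : M →ₗ[R] M →ₗ[R] R} {a l m : M}
    (ha : a ∈ ker (B.compl₂ (ker B).subtype)) (hl : l ∈ ker B) (hm : m ∈ ker B) (b : M) :
    B (a + l) (b + m) = B a b := by
  simp only [map_add, add_apply, mem_ker_iff_forall_apply_eq_zero.1 hl,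
    mem_ker_compl₂_subtype_iff_s5.1 ha m hm, add_zero]

section Intertwining

variable {B : M →ₗ[R] M →ₗ[R] R} {B' : M' →ₗ[R] M' →ₗ[R] R} {e : M → M'}

theorem mem_ker_of_apply_mem_ker (he : ∀ x y, B x y = B' (e x) (e y)) {x : M}
    (hx : e x ∈ ker B') : x ∈ ker B :=
  mem_ker_iff_forall_apply_eq_zero.2 fun w => by
    rw [he, mem_ker_iff_forall_apply_eq_zero.1 hx]

theorem apply_mem_ker_compl₂_subtype_ker (he : ∀ x y, B x y = B' (e x) (e y))
    (he_surj : Function.Surjective e) {z : M} (hz : z ∈ ker (B.compl₂ (ker B).subtype)) :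
    e z ∈ ker (B'.compl₂ (ker B').subtype) := by
  refine mem_ker_compl₂_subtype_iff_s5.2 fun l' hl' => ?_
  obtain ⟨l, rfl⟩ := he_surj l'
  rw [← he]
  exact mem_ker_compl₂_subtype_iff_s5.1 hz l (mem_ker_of_apply_mem_ker he hl')

end Intertwining

end LinearMap

namespace Submodule

variable {𝕜 E : Type*} [RCLike 𝕜] [NormedAddCommGroup E] [InnerProductSpace 𝕜 E]

theorem starProjection_orthogonal_inf_eq_sub {N K : Submodule 𝕜 E} [N.HasOrthogonalProjection]
    [(Nᗮ ⊓ K).HasOrthogonalProjection] (hNK : N ≤ K) {v : E} (hv : v ∈ K) :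
    (Nᗮ ⊓ K).starProjection v = v - N.starProjection v := by
  refine eq_starProjection_of_mem_orthogonal
    (mem_inf.2 ⟨N.sub_starProjection_mem_orthogonal v, K.sub_mem hv (hNK (by simp))⟩) ?_
  rw [sub_sub_cancel]
  exact orthogonal_le inf_le_left (N.le_orthogonal_orthogonal (by simp))

end Submodule

theorem stmt_5_general {U U' : Type*}
    [NormedAddCommGroup U] [InnerProductSpace ℝ U]
    [NormedAddCommGroup U'] [InnerProductSpace ℝ U'] [FiniteDimensional ℝ U']
    (Φ : U →ₗ[ℝ] U →ₗ[ℝ] ℝ) (Φ' : U' →ₗ[ℝ] U' →ₗ[ℝ] ℝ)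
    (φ : U ≃ₜ U')
    (h : ∀ x y : U, Φ x y = Φ' (φ x) (φ y))
    (L : Submodule ℝ U) (hL : L = LinearMap.ker Φ)
    (K : Submodule ℝ U) (hK : K = LinearMap.ker (Φ.compl₂ L.subtype))
    (L' : Submodule ℝ U') (hL' : L' = LinearMap.ker Φ')
    (K' : Submodule ℝ U') (hK' : K' = LinearMap.ker (Φ'.compl₂ L'.subtype))
    (ψ : ↥(Lᗮ ⊓ K) → ↥(L'ᗮ ⊓ K'))
    (hψ : ∀ x : ↥(Lᗮ ⊓ K), ψ x = Submodule.orthogonalProjection (L'ᗮ ⊓ K') (φ (x : U))) :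
    ∀ x y : ↥(Lᗮ ⊓ K), Φ (x : U) (y : U) = Φ' (ψ x : U') (ψ y : U') := by
  subst hL' hK'
  have hφ_mem : ∀ z ∈ K, φ z ∈ LinearMap.ker (Φ'.compl₂ (LinearMap.ker Φ').subtype) := by
    subst hL hK
    exact fun z hz => LinearMap.apply_mem_ker_compl₂_subtype_ker h φ.surjective hz
  have hφ_eq : ∀ z : ↥(Lᗮ ⊓ K),
      φ z = ψ z + (LinearMap.ker Φ').starProjection (φ z) := fun z => by
    rw [hψ, Submodule.coe_orthogonalProjectionOnto_apply,
      Submodule.starProjection_orthogonal_inf_eq_sub (LinearMap.ker_le_ker_compl₂_subtype_ker Φ')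
        (hφ_mem z (Submodule.mem_inf.1 z.2).2), sub_add_cancel]
  intro x y
  rw [h, hφ_eq x, hφ_eq y,
    LinearMap.apply_add_add_of_mem_ker (Submodule.mem_inf.1 (ψ x).2).2 (by simp) (by simp)]

/-- In the setting of the construction of `ψ` (composition of
inclusion `L⊥∩K → U`, the homeomorphism `φ`, and the orthogonal projection
onto `L'⊥∩K'`), the restriction of `Φ` to `L⊥∩K` and the restriction of `Φ'`
to `L'⊥∩K'` satisfy `Φ(x,y) = Φ'(ψ x, ψ y)` for all `x, y ∈ L⊥∩K`. -/
theorem stmt_5 {U U' : Type*}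
    [NormedAddCommGroup U] [InnerProductSpace ℝ U] [FiniteDimensional ℝ U]
    [NormedAddCommGroup U'] [InnerProductSpace ℝ U'] [FiniteDimensional ℝ U']
    (Φ : U →ₗ[ℝ] U →ₗ[ℝ] ℝ) (Φ' : U' →ₗ[ℝ] U' →ₗ[ℝ] ℝ)
    (φ : U ≃ₜ U')
    (h : ∀ x y : U, Φ x y = Φ' (φ x) (φ y))
    (L : Submodule ℝ U) (hL : L = LinearMap.ker Φ)
    (K : Submodule ℝ U) (hK : K = LinearMap.ker (Φ.compl₂ L.subtype))
    (L' : Submodule ℝ U') (hL' : L' = LinearMap.ker Φ')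
    (K' : Submodule ℝ U') (hK' : K' = LinearMap.ker (Φ'.compl₂ L'.subtype))
    (ψ : ↥(Lᗮ ⊓ K) → ↥(L'ᗮ ⊓ K'))
    (hψ : ∀ x : ↥(Lᗮ ⊓ K), ψ x = Submodule.orthogonalProjection (L'ᗮ ⊓ K') (φ (x : U))) :
    ∀ x y : ↥(Lᗮ ⊓ K), Φ (x : U) (y : U) = Φ' (ψ x : U') (ψ y : U') :=
  stmt_5_general Φ Φ' φ h L hL K hK L' hL' K' hK' ψ hψ
end
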